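/- arXiv:2406.14362 — 3 statements merged into one kernel-verified Lean document; each statement's English description precedes it below -/
import Mathlib

section
/- Let x be a fixed vector in R^d and let z1, z2 be independently and uniformly sampled from the unit sphere S^d. Then E[ |z1^T z2| (x^T z1)^2 ] <= ||x||_2^2 / d^{3/2}. -/
/-! Reflections preserve the uniform measure on the sphere, so `∫ f ⟪u, z⟫` depends only on
`‖u‖`. Averaging over the coordinate directions `‖x‖ eᵢ` then gives `E ⟪x, z⟫² = ‖x‖² / d`, and
Cauchy–Schwarz gives `E |⟪u, z⟫| ≤ ‖u‖ / √d`. Integrating out `z₂` first bounds the integrand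
by `⟪x, z₁⟫² / √d`, whose expectation is `‖x‖² / d^{3/2}`. -/

open MeasureTheory

abbrev Euc (d : ℕ) := EuclideanSpace ℝ (Fin d)

/-- The uniform (rotation-invariant) probability measure on the unit sphere in `ℝ^d`. -/
noncomputable def uniformSphere (d : ℕ) :
    Measure (Metric.sphere (0 : Euc d) 1) :=
  ((volume : Measure (Euc d)).toSphere Set.univ)⁻¹ • (volume : Measure (Euc d)).toSphere

instance uniformSphere_finite (d : ℕ) : IsFiniteMeasure (uniformSphere d) := by
  constructor
  rw [uniformSphere, Measure.smul_apply, smul_eq_mul]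
  exact lt_of_le_of_lt (ENNReal.inv_mul_le_one _) ENNReal.one_lt_top

open Metric
open scoped Pointwise InnerProductSpace

namespace LinearIsometryEquiv

variable {E : Type*} [NormedAddCommGroup E] [NormedSpace ℝ E]

def sphereHomeomorph (e : E ≃ₗᵢ[ℝ] E) : sphere (0 : E) 1 ≃ₜ sphere (0 : E) 1 :=
  e.toHomeomorph.subtype fun z => by simp

@[simp]
theorem coe_sphereHomeomorph_apply (e : E ≃ₗᵢ[ℝ] E) (z : sphere (0 : E) 1) :
    (e.sphereHomeomorph z : E) = e z :=
  rfl

theorem image_val_preimage_sphereHomeomorph (e : E ≃ₗᵢ[ℝ] E) (s : Set (sphere (0 : E) 1)) :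
    Subtype.val '' (e.sphereHomeomorph ⁻¹' s) = e ⁻¹' (Subtype.val '' s) := by
  rw [← e.sphereHomeomorph.image_symm, Set.image_image]
  exact (Set.image_image e.symm Subtype.val s).symm.trans (e.toLinearEquiv.image_symm_eq_preimage _)

theorem preimage_set_smul (e : E ≃ₗᵢ[ℝ] E) (S : Set ℝ) (A : Set E) :
    e ⁻¹' (S • A) = S • e ⁻¹' A := by
  ext z
  simp only [Set.mem_preimage, Set.mem_smul]
  constructor
  · rintro ⟨r, hr, w, hw, hrw⟩
    refine ⟨r, hr, e.symm w, by simpa using hw, ?_⟩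
    rw [← e.symm_apply_apply z, ← hrw, e.symm.map_smul]
  · rintro ⟨r, hr, w, hw, rfl⟩
    exact ⟨r, hr, e w, hw, (e.map_smul r w).symm⟩

variable [MeasurableSpace E] [BorelSpace E]

theorem measurePreserving_sphereHomeomorph_toSphere {μ : Measure E} (e : E ≃ₗᵢ[ℝ] E)
    (he : MeasurePreserving e μ μ) :
    MeasurePreserving e.sphereHomeomorph μ.toSphere μ.toSphere := by
  refine ⟨e.sphereHomeomorph.continuous.measurable, Measure.ext fun s hs => ?_⟩
  rw [Measure.map_apply e.sphereHomeomorph.continuous.measurable hs,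
    μ.toSphere_apply' (e.sphereHomeomorph.continuous.measurable hs), μ.toSphere_apply' hs,
    image_val_preimage_sphereHomeomorph, ← preimage_set_smul]
  exact congrArg _ (he.measure_preimage_equiv (f := e.toHomeomorph.toMeasurableEquiv) _)

end LinearIsometryEquiv

theorem sq_integral_le_integral_sq {Ω : Type*} [MeasurableSpace Ω] {μ : Measure Ω}
    [IsProbabilityMeasure μ] {X : Ω → ℝ} (hX : MemLp X 2 μ) :
    (∫ ω, X ω ∂μ) ^ 2 ≤ ∫ ω, X ω ^ 2 ∂μ := by
  have := ProbabilityTheory.variance_nonneg X μ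
  rw [ProbabilityTheory.variance_eq_sub hX] at this
  simpa [sub_nonneg] using this

namespace UniformSphere

variable {d : ℕ}

theorem isProbabilityMeasure (hd : 0 < d) : IsProbabilityMeasure (uniformSphere d) := by
  have : Nonempty (Fin d) := ⟨⟨0, hd⟩⟩
  constructor
  rw [uniformSphere, Measure.smul_apply, smul_eq_mul]
  exact ENNReal.inv_mul_cancel (Measure.measure_univ_ne_zero.mpr (Measure.toSphere_ne_zero _))
    (measure_ne_top _ _)

theorem measurePreserving_sphereHomeomorph (e : Euc d ≃ₗᵢ[ℝ] Euc d) :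
    MeasurePreserving e.sphereHomeomorph (uniformSphere d) (uniformSphere d) := by
  have h := e.measurePreserving_sphereHomeomorph_toSphere e.measurePreserving
  refine ⟨h.measurable, ?_⟩
  rw [uniformSphere, Measure.map_smul, h.map_eq]

theorem integral_comp_inner_eq (f : ℝ → ℝ) {u v : Euc d} (h : ‖u‖ = ‖v‖) :
    ∫ z, f ⟪u, (z : Euc d)⟫_ℝ ∂(uniformSphere d) =
      ∫ z, f ⟪v, (z : Euc d)⟫_ℝ ∂(uniformSphere d) := by
  let e := (ℝ ∙ (u - v))ᗮ.reflection
  have he : e u = v := Submodule.reflection_sub h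
  refine Eq.trans ?_ ((measurePreserving_sphereHomeomorph e).integral_comp'
    (f := e.sphereHomeomorph.toMeasurableEquiv) fun z => f ⟪v, (z : Euc d)⟫_ℝ)
  simp only [← he, Homeomorph.toMeasurableEquiv_coe,
    LinearIsometryEquiv.coe_sphereHomeomorph_apply, LinearIsometryEquiv.inner_map_map]

theorem integrable_of_continuous {f : sphere (0 : Euc d) 1 → ℝ} (hf : Continuous f) :
    Integrable f (uniformSphere d) :=
  hf.integrable_of_hasCompactSupport (.of_compactSpace f)

theorem integral_inner_sq (hd : 0 < d) (x : Euc d) :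
    ∫ z, ⟪x, (z : Euc d)⟫_ℝ ^ 2 ∂(uniformSphere d) = ‖x‖ ^ 2 / d := by
  have := isProbabilityMeasure hd
  have hsum (z : sphere (0 : Euc d) 1) :
      ∑ i, ⟪EuclideanSpace.single i ‖x‖, (z : Euc d)⟫_ℝ ^ 2 = ‖x‖ ^ 2 := by
    simp [EuclideanSpace.inner_single_left, mul_pow, ← Finset.mul_sum,
      ← EuclideanSpace.real_norm_sq_eq]
  have hd' : (d : ℝ) ≠ 0 := by positivity
  rw [eq_div_iff hd']
  calc (∫ z, ⟪x, (z : Euc d)⟫_ℝ ^ 2 ∂(uniformSphere d)) * d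
      = ∑ i : Fin d, ∫ z, ⟪EuclideanSpace.single i ‖x‖, (z : Euc d)⟫_ℝ ^ 2 ∂(uniformSphere d) := by
        have (i : Fin d) := integral_comp_inner_eq (· ^ 2)
          (show ‖EuclideanSpace.single i ‖x‖‖ = ‖x‖ by simp)
        simp [this, mul_comm]
    _ = ∫ z, ∑ i, ⟪EuclideanSpace.single i ‖x‖, (z : Euc d)⟫_ℝ ^ 2 ∂(uniformSphere d) :=
        (integral_finsetSum _ fun i _ => integrable_of_continuous (by fun_prop)).symm
    _ = ‖x‖ ^ 2 := by simp [hsum]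

theorem integral_abs_inner_le (hd : 0 < d) (u : Euc d) :
    ∫ z, |⟪u, (z : Euc d)⟫_ℝ| ∂(uniformSphere d) ≤ ‖u‖ / √d := by
  have := isProbabilityMeasure hd
  have hL2 : MemLp (fun z : sphere (0 : Euc d) 1 => |⟪u, (z : Euc d)⟫_ℝ|) 2 (uniformSphere d) :=
    (memLp_two_iff_integrable_sq (by fun_prop)).mpr (integrable_of_continuous (by fun_prop))
  have h := sq_integral_le_integral_sq hL2
  simp only [sq_abs, integral_inner_sq hd] at h
  rw [div_eq_mul_inv, ← Real.sqrt_inv, ← Real.sqrt_sq (norm_nonneg u),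
    ← Real.sqrt_mul (by positivity), ← div_eq_mul_inv]
  exact Real.le_sqrt_of_sq_le h

end UniformSphere

/-- For a fixed `x ∈ ℝ^d` and `z1, z2` independent uniform on the sphere,
`E[|z1ᵀ z2| (xᵀ z1)²] ≤ ‖x‖² / d^{3/2}`. -/
theorem stmt4 (d : ℕ) (hd : 0 < d) (x : Euc d) :
    ∫ z1 : Metric.sphere (0 : Euc d) 1, ∫ z2 : Metric.sphere (0 : Euc d) 1,
        |(inner ℝ (z1 : Euc d) (z2 : Euc d) : ℝ)| * (inner ℝ x (z1 : Euc d) : ℝ) ^ 2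
        ∂(uniformSphere d) ∂(uniformSphere d)
      ≤ ‖x‖ ^ 2 / Real.sqrt ((d : ℝ) ^ 3) := by
  have := UniformSphere.isProbabilityMeasure hd
  calc _ = ∫ z1, (∫ z2, |⟪(z1 : Euc d), (z2 : Euc d)⟫_ℝ| ∂(uniformSphere d)) *
        ⟪x, (z1 : Euc d)⟫_ℝ ^ 2 ∂(uniformSphere d) := by simp only [integral_mul_const]
    _ ≤ ∫ z1, 1 / √d * ⟪x, (z1 : Euc d)⟫_ℝ ^ 2 ∂(uniformSphere d) := by
      refine integral_mono_of_nonneg (.of_forall fun z1 => by positivity)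
        (UniformSphere.integrable_of_continuous (by fun_prop)) (.of_forall fun z1 => ?_)
      refine mul_le_mul_of_nonneg_right ?_ (sq_nonneg _)
      simpa using UniformSphere.integral_abs_inner_le hd (z1 : Euc d)
    _ = ‖x‖ ^ 2 / √((d : ℝ) ^ 3) := by
      rw [integral_const_mul, UniformSphere.integral_inner_sq hd,
        show (d : ℝ) ^ 3 = d ^ 2 * d by ring, Real.sqrt_mul (by positivity),
        Real.sqrt_sq (by positivity)]
      field_simp
end

section
/- Let F : R^d -> R be L-smooth, mu > 0, and define g(w, z) = d * (F(w + mu*z) - F(w - mu*z))/(2*mu) * z for z uniform on the unit sphere S^d. Then E_z[ ||g(w, z)||_2^2 ] <= 2*d*||grad F(w)||_2^2 + (L^2 * mu^2 * d^2)/2. -/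
/-!
The smoothness remainder bound `|F (w ± μz) - F w ∓ μ⟪∇F w, z⟫| ≤ Lμ²/2` and
`(a + b)² ≤ 2a² + 2b²` bound the integrand by `d² (2⟪∇F w, z⟫² + L²μ²/2)`.
The second moment of `⟪u, z⟫` on the sphere is computed by symmetry: linear isometries preserve
the surface measure and a reflection exchanges any two vectors of equal norm, so the moment
depends only on `‖u‖`; summing over an orthonormal basis, `∑ᵢ ⟪bᵢ, z⟫² = ‖z‖² = 1`, gives
`E ⟪u, z⟫² = ‖u‖² / d`.
-/

open MeasureTheory

open Metric Set Module
open scoped RealInnerProductSpace Pointwise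

section
variable {E : Type*} [NormedAddCommGroup E] [InnerProductSpace ℝ E] [CompleteSpace E] {F : E → ℝ}

theorem hasDerivAt_comp_add_smul {w v : E} {t : ℝ} (hF : DifferentiableAt ℝ F (w + t • v)) :
    HasDerivAt (fun s : ℝ => F (w + s • v)) ⟪gradient F (w + t • v), v⟫ t := by
  have hline : HasDerivAt (fun s : ℝ => w + s • v) v t := by
    simpa using ((hasDerivAt_id t).smul_const v).const_add w
  exact (hF.hasGradientAt.hasFDerivAt.comp_hasDerivAt t hline).congr_deriv (by simp)

theorem abs_sub_sub_inner_gradient_le {L : ℝ} (hF : Differentiable ℝ F)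
    (hsmooth : ∀ x y : E, ‖gradient F x - gradient F y‖ ≤ L * ‖x - y‖) (w v : E) :
    |F (w + v) - F w - ⟪gradient F w, v⟫| ≤ L * ‖v‖ ^ 2 / 2 := by
  set g := gradient F w
  let f : ℝ → ℝ := fun t => F (w + t • v) - F w - t * ⟪g, v⟫
  have hf (t : ℝ) : HasDerivAt f (⟪gradient F (w + t • v) - g, v⟫) t := by
    refine (((hasDerivAt_comp_add_smul (hF _)).sub_const (F w)).sub
      ((hasDerivAt_id t).mul_const ⟪g, v⟫)).congr_deriv ?_
    simp [inner_sub_left]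
  have hB (t : ℝ) : HasDerivAt (fun s => L * ‖v‖ ^ 2 / 2 * s ^ 2) (L * ‖v‖ ^ 2 * t) t := by
    refine ((hasDerivAt_pow 2 t).const_mul (L * ‖v‖ ^ 2 / 2)).congr_deriv ?_
    ring
  have hf'_le (t : ℝ) (ht : t ∈ Ico (0 : ℝ) 1) :
      ‖⟪gradient F (w + t • v) - g, v⟫‖ ≤ L * ‖v‖ ^ 2 * t :=
    calc ‖⟪gradient F (w + t • v) - g, v⟫‖ ≤ ‖gradient F (w + t • v) - g‖ * ‖v‖ :=
          norm_inner_le_norm _ _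
      _ ≤ L * ‖t • v‖ * ‖v‖ := by
          gcongr
          simpa using hsmooth (w + t • v) w
      _ = L * ‖v‖ ^ 2 * t := by
          rw [norm_smul, Real.norm_of_nonneg ht.1]
          ring
  have := image_norm_le_of_norm_deriv_right_le_deriv_boundary
    (fun t _ => (hf t).continuousAt.continuousWithinAt) (fun t _ => (hf t).hasDerivWithinAt)
    (by simp [f]) hB hf'_le (right_mem_Icc.2 zero_le_one)
  simpa [f] using this

theorem abs_sub_sub_two_inner_gradient_le {L : ℝ} (hF : Differentiable ℝ F)
    (hsmooth : ∀ x y : E, ‖gradient F x - gradient F y‖ ≤ L * ‖x - y‖) (w v : E) :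
    |F (w + v) - F (w - v) - 2 * ⟪gradient F w, v⟫| ≤ L * ‖v‖ ^ 2 := by
  have hplus := abs_sub_sub_inner_gradient_le hF hsmooth w v
  have hminus := abs_sub_sub_inner_gradient_le hF hsmooth w (-v)
  rw [norm_neg, inner_neg_right, ← sub_eq_add_neg] at hminus
  calc |F (w + v) - F (w - v) - 2 * ⟪gradient F w, v⟫|
      = |(F (w + v) - F w - ⟪gradient F w, v⟫) - (F (w - v) - F w - -⟪gradient F w, v⟫)| := by
        ring_nf
    _ ≤ L * ‖v‖ ^ 2 / 2 + L * ‖v‖ ^ 2 / 2 := (abs_sub _ _).trans (add_le_add hplus hminus)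
    _ = L * ‖v‖ ^ 2 := by ring

theorem sq_central_difference_quotient_le {L μ : ℝ} (hμ : 0 < μ) (hF : Differentiable ℝ F)
    (hsmooth : ∀ x y : E, ‖gradient F x - gradient F y‖ ≤ L * ‖x - y‖) (w : E) {z : E}
    (hz : ‖z‖ = 1) :
    ((F (w + μ • z) - F (w - μ • z)) / (2 * μ)) ^ 2 ≤
      2 * ⟪gradient F w, z⟫ ^ 2 + L ^ 2 * μ ^ 2 / 2 := by
  set s := ⟪gradient F w, z⟫
  set e := F (w + μ • z) - F (w - μ • z) - 2 * (μ * s)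
  have he : |e| ≤ L * μ ^ 2 := by
    simpa [e, s, norm_smul, hz, abs_of_pos hμ, real_inner_smul_right] using
      abs_sub_sub_two_inner_gradient_le hF hsmooth w (μ • z)
  have hquot : (F (w + μ • z) - F (w - μ • z)) / (2 * μ) = s + e / (2 * μ) := by
    simp only [e]
    field_simp
    ring
  have he_sq : (e / (2 * μ)) ^ 2 ≤ L ^ 2 * μ ^ 2 / 4 := by
    rw [div_pow, div_le_iff₀ (by positivity), ← sq_abs]
    nlinarith [abs_nonneg e]
  rw [hquot]
  nlinarith [sq_nonneg (s - e / (2 * μ))]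

end

section
variable {E : Type*} [NormedAddCommGroup E] [NormedSpace ℝ E]

def LinearIsometryEquiv.sphereHomeomorph_s12 (T : E ≃ₗᵢ[ℝ] E) :
    sphere (0 : E) 1 ≃ₜ sphere (0 : E) 1 :=
  T.toHomeomorph.subtype fun x => by simp

@[simp]
theorem LinearIsometryEquiv.coe_sphereHomeomorph_apply_s12 (T : E ≃ₗᵢ[ℝ] E) (z : sphere (0 : E) 1) :
    (T.sphereHomeomorph_s12 z : E) = T z :=
  rfl

theorem LinearIsometryEquiv.preimage_smul_image_sphere (T : E ≃ₗᵢ[ℝ] E) (I : Set ℝ)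
    (s : Set (sphere (0 : E) 1)) :
    T ⁻¹' (I • ((↑) '' s)) = I • ((↑) '' (T.sphereHomeomorph_s12 ⁻¹' s) : Set E) := by
  ext x
  simp only [mem_preimage, mem_smul, mem_image]
  constructor
  · rintro ⟨r, hr, _, ⟨z, hz, rfl⟩, hx⟩
    refine ⟨r, hr, T.symm z, ⟨T.sphereHomeomorph_s12.symm z, by simpa using hz, rfl⟩, ?_⟩
    rw [← T.symm_apply_apply x, ← hx, T.symm.map_smul]
  · rintro ⟨r, hr, _, ⟨z, hz, rfl⟩, rfl⟩
    exact ⟨r, hr, T z, ⟨T.sphereHomeomorph_s12 z, hz, rfl⟩, (T.map_smul r z).symm⟩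

theorem MeasureTheory.MeasurePreserving.sphereHomeomorph_toSphere [MeasurableSpace E]
    [BorelSpace E] {μ : Measure E} {T : E ≃ₗᵢ[ℝ] E} (hT : MeasurePreserving T μ μ) :
    MeasurePreserving T.sphereHomeomorph_s12 μ.toSphere μ.toSphere := by
  refine ⟨T.sphereHomeomorph_s12.continuous.measurable, ?_⟩
  ext s hs
  rw [Measure.map_apply T.sphereHomeomorph_s12.continuous.measurable hs,
    Measure.toSphere_apply' _ (T.sphereHomeomorph_s12.continuous.measurable hs),
    Measure.toSphere_apply' _ hs, ← T.preimage_smul_image_sphere]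
  exact congrArg _ (MeasurePreserving.measure_preimage_equiv
    (f := T.toHomeomorph.toMeasurableEquiv) hT _)

end

section
variable {E : Type*} [NormedAddCommGroup E] [InnerProductSpace ℝ E]
  [MeasurableSpace E] [BorelSpace E] [FiniteDimensional ℝ E]

theorem integrable_inner_sq_sphere (ν : Measure (sphere (0 : E) 1)) [IsFiniteMeasure ν] (u : E) :
    Integrable (fun z : sphere (0 : E) 1 => ⟪u, (z : E)⟫ ^ 2) ν :=
  (by fun_prop : Continuous fun z : sphere (0 : E) 1 => ⟪u, (z : E)⟫ ^ 2)
    |>.integrable_of_hasCompactSupport (HasCompactSupport.of_compactSpace _)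

theorem integral_inner_sq_toSphere_linearIsometryEquiv (T : E ≃ₗᵢ[ℝ] E) (u : E) :
    ∫ z, ⟪T u, (z : E)⟫ ^ 2 ∂(volume : Measure E).toSphere =
      ∫ z, ⟪u, (z : E)⟫ ^ 2 ∂(volume : Measure E).toSphere := by
  rw [← T.measurePreserving.sphereHomeomorph_toSphere.integral_comp
    T.sphereHomeomorph_s12.measurableEmbedding]
  simp only [T.coe_sphereHomeomorph_apply_s12, T.inner_map_map]

theorem integral_inner_sq_toSphere_eq_of_norm_eq {u v : E} (h : ‖u‖ = ‖v‖) :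
    ∫ z, ⟪u, (z : E)⟫ ^ 2 ∂(volume : Measure E).toSphere =
      ∫ z, ⟪v, (z : E)⟫ ^ 2 ∂(volume : Measure E).toSphere := by
  rw [← Submodule.reflection_sub h.symm, integral_inner_sq_toSphere_linearIsometryEquiv]

theorem finrank_mul_integral_inner_sq_toSphere (u : E) :
    finrank ℝ E * ∫ z, ⟪u, (z : E)⟫ ^ 2 ∂(volume : Measure E).toSphere =
      ‖u‖ ^ 2 * (volume : Measure E).toSphere.real univ := by
  set b := stdOrthonormalBasis ℝ E
  calc finrank ℝ E * ∫ z, ⟪u, (z : E)⟫ ^ 2 ∂(volume : Measure E).toSphere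
      = ∑ i, ∫ z, ⟪‖u‖ • b i, (z : E)⟫ ^ 2 ∂(volume : Measure E).toSphere := by
        have hnorm (i) : ‖u‖ = ‖‖u‖ • b i‖ := by simp [norm_smul, b.orthonormal.1]
        simp [← integral_inner_sq_toSphere_eq_of_norm_eq (hnorm _)]
    _ = ‖u‖ ^ 2 * ∫ z, ∑ i, ⟪b i, (z : E)⟫ ^ 2 ∂(volume : Measure E).toSphere := by
        rw [integral_finsetSum _ fun i _ => integrable_inner_sq_sphere _ _, Finset.mul_sum]
        simp only [real_inner_smul_left, mul_pow, integral_const_mul]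
    _ = ‖u‖ ^ 2 * (volume : Measure E).toSphere.real univ := by
        simp [b.sum_sq_inner_right, norm_eq_of_mem_sphere]
end

theorem isProbabilityMeasure_uniformSphere {d : ℕ} (hd : 0 < d) :
    IsProbabilityMeasure (uniformSphere d) := by
  have : NeZero d := ⟨hd.ne'⟩
  constructor
  rw [uniformSphere, Measure.smul_apply, smul_eq_mul]
  exact ENNReal.inv_mul_cancel (Measure.measure_univ_ne_zero.2 (Measure.toSphere_ne_zero _))
    (measure_ne_top _ _)

theorem integral_inner_sq_uniformSphere {d : ℕ} (hd : 0 < d) (u : Euc d) :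
    ∫ z, ⟪u, (z : Euc d)⟫ ^ 2 ∂uniformSphere d = ‖u‖ ^ 2 / d := by
  have : NeZero d := ⟨hd.ne'⟩
  have hpos : 0 < (volume : Measure (Euc d)).toSphere.real univ :=
    ENNReal.toReal_pos (Measure.measure_univ_ne_zero.2 (Measure.toSphere_ne_zero _))
      (measure_ne_top _ _)
  have key := finrank_mul_integral_inner_sq_toSphere u
  rw [finrank_euclideanSpace_fin] at key
  rw [uniformSphere, integral_smul_measure, ENNReal.toReal_inv, smul_eq_mul, ← measureReal_def]
  field_simp
  linarith

theorem stmt12_general (d : ℕ) (hd : 0 < d) (F : Euc d → ℝ) (L μ : ℝ) (hμ : 0 < μ)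
    (hF : Differentiable ℝ F)
    (hsmooth : ∀ x y : Euc d, ‖gradient F x - gradient F y‖ ≤ L * ‖x - y‖) (w : Euc d) :
    ∫ z : Metric.sphere (0 : Euc d) 1,
        ‖((d : ℝ) * (F (w + μ • (z : Euc d)) - F (w - μ • (z : Euc d))) / (2 * μ)) •
          (z : Euc d)‖ ^ 2 ∂(uniformSphere d)
      ≤ 2 * (d : ℝ) * ‖gradient F w‖ ^ 2 + L ^ 2 * μ ^ 2 * (d : ℝ) ^ 2 / 2 := by
  have := isProbabilityMeasure_uniformSphere hd
  have hpoint (z : sphere (0 : Euc d) 1) :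
      ‖((d : ℝ) * (F (w + μ • (z : Euc d)) - F (w - μ • (z : Euc d))) / (2 * μ)) •
          (z : Euc d)‖ ^ 2 ≤ d ^ 2 * (2 * ⟪gradient F w, z⟫ ^ 2 + L ^ 2 * μ ^ 2 / 2) := by
    rw [norm_smul, norm_eq_of_mem_sphere, mul_one, Real.norm_eq_abs, sq_abs, mul_div_assoc,
      mul_pow]
    gcongr
    exact sq_central_difference_quotient_le hμ hF hsmooth w (norm_eq_of_mem_sphere z)
  calc _ ≤ ∫ z : sphere (0 : Euc d) 1,
        d ^ 2 * (2 * ⟪gradient F w, z⟫ ^ 2 + L ^ 2 * μ ^ 2 / 2) ∂uniformSphere d :=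
        integral_mono_of_nonneg (ae_of_all _ fun _ => by positivity)
          ((((integrable_inner_sq_sphere _ _).const_mul 2).add (integrable_const _)).const_mul _)
          (ae_of_all _ hpoint)
    _ = d ^ 2 * (2 * (‖gradient F w‖ ^ 2 / d) + L ^ 2 * μ ^ 2 / 2) := by
        rw [integral_const_mul, integral_add ((integrable_inner_sq_sphere _ _).const_mul 2)
          (integrable_const _), integral_const_mul, integral_inner_sq_uniformSphere hd]
        simp
    _ = 2 * d * ‖gradient F w‖ ^ 2 + L ^ 2 * μ ^ 2 * d ^ 2 / 2 := by
        field_simp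

/-- Second moment bound for the zero-order estimate with `μ > 0`:
`E_z‖g(w,z)‖² ≤ 2d‖∇F(w)‖² + L²μ²d²/2`. -/
theorem stmt12 (d : ℕ) (hd : 0 < d) (F : Euc d → ℝ) (L μ : ℝ) (hμ : 0 < μ) (hL : 0 < L)
    (hF : Differentiable ℝ F)
    (hsmooth : ∀ x y : Euc d, ‖gradient F x - gradient F y‖ ≤ L * ‖x - y‖) (w : Euc d) :
    ∫ z : Metric.sphere (0 : Euc d) 1,
        ‖((d : ℝ) * (F (w + μ • (z : Euc d)) - F (w - μ • (z : Euc d))) / (2 * μ)) •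
          (z : Euc d)‖ ^ 2 ∂(uniformSphere d)
      ≤ 2 * (d : ℝ) * ‖gradient F w‖ ^ 2 + L ^ 2 * μ ^ 2 * (d : ℝ) ^ 2 / 2 :=
  stmt12_general d hd F L μ hμ hF hsmooth w
end

section
/- (Trimmed mean robustness) Let beta satisfy alpha <= beta < 1/2, and consider m real values where a set of at least (1-alpha)m values x̄^i are 'benign' and the rest are arbitrary. Suppose | (1/((1-alpha)m)) * sum over benign i of x̄^i - mu_x | <= t and max over benign i of |x̄^i - mu_x| <= s. Then the beta-trimmed mean of all m values satisfies |TrMn_beta({x̄^i : i in [m]}) - mu_x| <= (t + 3*beta*s)/(1 - 2*beta). -/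
/-! At most `m - #S ≤ ⌊βm⌋` values are not benign, so at most that many lie below `μx - s` or
above `μx + s`, and every value surviving the trimming lies within `s` of `μx`. The surviving
values and the benign values are two sub-multisets of all `m` values: outside their intersection
the first has at most `m - #S` elements and the second at most `2⌊βm⌋`, all within `s` of `μx`,
so their centred sums differ by at most `3⌊βm⌋s`. The benign centred sum is at most `#S t`, and
dividing by `m - 2⌊βm⌋ ≥ (1 - 2β)m` gives the bound. -/

/-- The `β`-trimmed mean of `m` real values: remove the `⌊β m⌋` largest and `⌊β m⌋`
smallest values and average the rest. -/
noncomputable def trimmedMean (m : ℕ) (β : ℝ) (x : Fin m → ℝ) : ℝ :=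
  let b := ⌊β * m⌋₊
  let l := (List.ofFn x).mergeSort (· ≤ ·)
  ((l.drop b).take (m - 2 * b)).sum / (m - 2 * b : ℝ)

namespace List

variable {α : Type*} [LinearOrder α] {l : List α} {b : ℕ} {v : α}

theorem Pairwise.le_of_mem_drop_of_countP_lt_le (hl : l.Pairwise (· ≤ ·)) {a : α}
    (hcount : l.countP (· < a) ≤ b) (hv : v ∈ l.drop b) : a ≤ v := by
  by_contra! hva
  have hb : b < l.length := by
    by_contra! hb
    simp [drop_eq_nil_of_le hb] at hv
  rw [← take_append_drop b l, pairwise_append] at hl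
  have htake : (l.take b).countP (· < a) = b := by
    rw [countP_eq_length.mpr, length_take_of_le hb.le]
    intro u hu
    simpa using (hl.2.2 u hu v hv).trans_lt hva
  have hdrop : 0 < (l.drop b).countP (· < a) := countP_pos_iff.mpr ⟨v, hv, by simpa⟩
  rw [← take_append_drop b l, countP_append] at hcount
  omega

theorem Pairwise.le_of_mem_take_of_countP_gt_le (hl : l.Pairwise (· ≤ ·)) {c : α}
    (hcount : l.countP (c < ·) ≤ b) (hv : v ∈ l.take (l.length - b)) : v ≤ c := by
  by_contra! hcv
  have hb : b ≤ l.length := by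
    by_contra! hb
    simp [Nat.sub_eq_zero_of_le hb.le] at hv
  rw [← take_append_drop (l.length - b) l, pairwise_append] at hl
  have hdrop : (l.drop (l.length - b)).countP (c < ·) = b := by
    rw [countP_eq_length.mpr, length_drop]
    · omega
    intro u hu
    simpa using hcv.trans_le (hl.2.2 v hv u hu)
  have htake : 0 < (l.take (l.length - b)).countP (c < ·) := countP_pos_iff.mpr ⟨v, hv, by simpa⟩
  rw [← take_append_drop (l.length - b) l, countP_append] at hcount
  omega

theorem Pairwise.mem_Icc_of_mem_take_drop (hl : l.Pairwise (· ≤ ·)) {a c : α}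
    (hlo : l.countP (· < a) ≤ b) (hhi : l.countP (c < ·) ≤ b)
    (hv : v ∈ (l.drop b).take (l.length - 2 * b)) : v ∈ Set.Icc a c := by
  refine ⟨hl.le_of_mem_drop_of_countP_lt_le hlo (mem_of_mem_take hv),
    hl.le_of_mem_take_of_countP_gt_le hhi ?_⟩
  have hk : 0 < l.length - 2 * b := by
    by_contra! hk
    simp [Nat.le_zero.mp hk] at hv
  rw [take_drop] at hv
  exact (take_sublist_take_left (by omega)).subset (mem_of_mem_drop hv)

end List

theorem List.countP_mergeSort_ofFn_le_sub_card {α : Type*} [LinearOrder α] {m : ℕ}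
    (x : Fin m → α) {S : Finset (Fin m)} {p : α → Prop} [DecidablePred p] (h : ∀ i ∈ S, ¬p (x i)) :
    ((List.ofFn x).mergeSort (· ≤ ·)).countP (fun v => p v) ≤ m - S.card := by
  classical
  calc ((List.ofFn x).mergeSort (· ≤ ·)).countP (fun v => p v)
      = (Finset.univ.filter (fun i => p (x i))).card := by
        rw [(List.mergeSort_perm _ _).countP_eq, List.ofFn_eq_map, List.countP_map]
        simp [Fin.univ_def, Finset.filter, Finset.card, List.countP_eq_length_filter,
          Function.comp_def]
    _ ≤ Sᶜ.card := Finset.card_le_card fun i hi => by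
        simp only [Finset.mem_filter, Finset.mem_univ, true_and] at hi
        exact Finset.mem_compl.mpr fun hiS => h i hiS hi
    _ = m - S.card := by simp [Finset.card_compl]

namespace Multiset

variable {G : Type*} [AddCommGroup G] [LinearOrder G] [IsOrderedAddMonoid G] {μ ε : G}

theorem abs_sum_sub_card_nsmul_le {s : Multiset G} (h : ∀ v ∈ s, |v - μ| ≤ ε) :
    |s.sum - card s • μ| ≤ card s • ε := by
  have hsum : s.sum - card s • μ = (s.map (· - μ)).sum := by
    simp [sum_map_sub, map_const', sum_replicate]
  calc |s.sum - card s • μ| = |(s.map (· - μ)).sum| := by rw [hsum]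
    _ ≤ ((s.map (· - μ)).map abs).sum := abs_sum_le_sum_abs
    _ ≤ card ((s.map (· - μ)).map abs) • ε := sum_le_card_nsmul _ _ (by simpa using h)
    _ = card s • ε := by simp

theorem abs_sum_sub_card_nsmul_sub_le_of_le [DecidableEq G] {T B L : Multiset G} (hT : T ≤ L)
    (hB : B ≤ L) (hTε : ∀ v ∈ T, |v - μ| ≤ ε) (hBε : ∀ v ∈ B, |v - μ| ≤ ε) (hε : 0 ≤ ε) :
    |(T.sum - card T • μ) - (B.sum - card B • μ)|
      ≤ (card L - card B + (card L - card T)) • ε := by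
  -- `T` and `B` share `T ∩ B`; the rest of `T` lies in `L - B`, the rest of `B` in `L - T`.
  have hTs : (T - B).sum + (T ∩ B).sum = T.sum := by rw [← sum_add, sub_add_inter]
  have hTc : card (T - B) + card (T ∩ B) = card T := by rw [← card_add, sub_add_inter]
  have hBs : (B - T).sum + (T ∩ B).sum = B.sum := by rw [inter_comm, ← sum_add, sub_add_inter]
  have hBc : card (B - T) + card (T ∩ B) = card B := by
    rw [inter_comm, ← card_add, sub_add_inter]
  have hsplit : (T.sum - card T • μ) - (B.sum - card B • μ) =
      ((T - B).sum - card (T - B) • μ) - ((B - T).sum - card (B - T) • μ) := by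
    rw [← hTs, ← hTc, ← hBs, ← hBc, add_nsmul, add_nsmul]
    abel
  have hcTB : card (T - B) ≤ card L - card B :=
    card_sub hB ▸ card_le_card (tsub_le_tsub_right hT B)
  have hcBT : card (B - T) ≤ card L - card T :=
    card_sub hT ▸ card_le_card (tsub_le_tsub_right hB T)
  rw [hsplit, add_nsmul]
  refine (abs_sub _ _).trans (add_le_add ?_ ?_)
  · exact (abs_sum_sub_card_nsmul_le fun v hv => hTε v (mem_of_le tsub_le_self hv)).trans
      (nsmul_le_nsmul_left hε hcTB)
  · exact (abs_sum_sub_card_nsmul_le fun v hv => hBε v (mem_of_le tsub_le_self hv)).trans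
      (nsmul_le_nsmul_left hε hcBT)

end Multiset

section TrimmedValues

variable {α : Type*} [LinearOrder α] {m : ℕ}

def trimmedValues (m b : ℕ) (x : Fin m → α) : List α :=
  (((List.ofFn x).mergeSort (· ≤ ·)).drop b).take (m - 2 * b)

theorem trimmedMean_eq (β : ℝ) (x : Fin m → ℝ) :
    trimmedMean m β x = (trimmedValues m ⌊β * m⌋₊ x).sum / (m - 2 * ⌊β * m⌋₊ : ℝ) := rfl

theorem length_trimmedValues (b : ℕ) (x : Fin m → α) :
    (trimmedValues m b x).length = m - 2 * b := by
  simp only [trimmedValues, List.length_take, List.length_drop, List.length_mergeSort,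
    List.length_ofFn]
  omega

theorem mem_Icc_of_mem_trimmedValues {b : ℕ} {x : Fin m → α} {S : Finset (Fin m)} {a c : α}
    (hS : ∀ i ∈ S, x i ∈ Set.Icc a c) (hout : m - S.card ≤ b) {v : α}
    (hv : v ∈ trimmedValues m b x) : v ∈ Set.Icc a c := by
  have hlen : ((List.ofFn x).mergeSort (· ≤ ·)).length = m := by simp
  refine List.sortedLE_mergeSort.pairwise.mem_Icc_of_mem_take_drop ?_ ?_ (by rwa [hlen])
  · exact (List.countP_mergeSort_ofFn_le_sub_card x (p := (· < a))
      fun i hi => not_lt.mpr (hS i hi).1).trans hout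
  · exact (List.countP_mergeSort_ofFn_le_sub_card x (p := (c < ·))
      fun i hi => not_lt.mpr (hS i hi).2).trans hout

end TrimmedValues

theorem abs_sum_trimmedValues_sub_le {G : Type*} [AddCommGroup G] [LinearOrder G]
    [IsOrderedAddMonoid G] {m b : ℕ} {x : Fin m → G} {S : Finset (Fin m)} {μ ε : G}
    (hε : 0 ≤ ε) (hS : ∀ i ∈ S, |x i - μ| ≤ ε) (hout : m - S.card ≤ b) :
    |((trimmedValues m b x).sum - (m - 2 * b) • μ) - (∑ i ∈ S, x i - S.card • μ)|
      ≤ (3 * b) • ε := by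
  classical
  have hkept : ∀ v ∈ (trimmedValues m b x : Multiset G), |v - μ| ≤ ε := fun v hv => by
    rw [abs_sub_comm]
    refine Set.mem_Icc_iff_abs_le.mpr (mem_Icc_of_mem_trimmedValues (fun i hi => ?_) hout hv)
    exact Set.mem_Icc_iff_abs_le.mp (by rw [abs_sub_comm]; exact hS i hi)
  have hL : (((List.ofFn x).mergeSort (· ≤ ·) : List G) : Multiset G) =
      Finset.univ.val.map x := by
    rw [Fin.univ_val_map]
    exact Multiset.coe_eq_coe.mpr (List.mergeSort_perm _ _)
  have hT : (trimmedValues m b x : Multiset G) ≤ Finset.univ.val.map x :=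
    hL ▸ Multiset.coe_le.mpr ((List.take_sublist _ _).trans (List.drop_sublist _ _)).subperm
  have hB : S.val.map x ≤ Finset.univ.val.map x :=
    Multiset.map_le_map (Finset.val_le_iff.mpr (Finset.subset_univ S))
  have := Multiset.abs_sum_sub_card_nsmul_sub_le_of_le hT hB hkept (by simpa using hS) hε
  simp only [Multiset.sum_coe, Multiset.coe_card, length_trimmedValues, Multiset.card_map,
    Finset.card_val, Finset.card_univ, Fintype.card_fin, Finset.sum_map_val] at this
  exact this.trans (nsmul_le_nsmul_left hε (by omega))


theorem abs_trimmedMean_sub_le {m : ℕ} {β μ s : ℝ} {x : Fin m → ℝ} {S : Finset (Fin m)}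
    (hs : 0 ≤ s) (hS : ∀ i ∈ S, |x i - μ| ≤ s) (hout : m - S.card ≤ ⌊β * m⌋₊)
    (h2b : 2 * ⌊β * m⌋₊ < m) :
    |trimmedMean m β x - μ|
      ≤ (|∑ i ∈ S, x i - S.card * μ| + 3 * ⌊β * m⌋₊ * s) / (m - 2 * ⌊β * m⌋₊) := by
  set b := ⌊β * m⌋₊ with hb
  have hD : (0 : ℝ) < m - 2 * b := by
    rw [sub_pos]
    exact_mod_cast h2b
  have htrim := abs_sum_trimmedValues_sub_le hs hS hout
  simp only [nsmul_eq_mul, Nat.cast_sub h2b.le, Nat.cast_mul, Nat.cast_ofNat] at htrim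
  have htm : trimmedMean m β x - μ =
      ((trimmedValues m b x).sum - (m - 2 * b) * μ) / (m - 2 * b) := by
    rw [trimmedMean_eq, ← hb]
    field_simp
  rw [htm, abs_div, abs_of_pos hD]
  gcongr
  have := abs_sub_abs_le_abs_sub ((trimmedValues m b x).sum - (m - 2 * b) * μ)
    (∑ i ∈ S, x i - S.card * μ)
  linarith

theorem abs_sub_mul_le_mul_of_abs_inv_mul_sub_le {a c μ t : ℝ} (hc : 0 < c)
    (h : |c⁻¹ * a - μ| ≤ t) : |a - c * μ| ≤ c * t := by
  have hid : a - c * μ = c * (c⁻¹ * a - μ) := by field_simp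
  rw [hid, abs_mul, abs_of_pos hc]
  exact mul_le_mul_of_nonneg_left h hc.le

theorem stmt19_general (m : ℕ) (hm : 0 < m) (α β μx t s : ℝ) (x : Fin m → ℝ)
    (S : Finset (Fin m)) (hαβ : α ≤ β) (hβ : β < 1 / 2)
    (hcard : (S.card : ℝ) = (1 - α) * m)
    (hmean : |(((1 - α) * m)⁻¹ * ∑ i ∈ S, x i) - μx| ≤ t)
    (hmax : ∀ i ∈ S, |x i - μx| ≤ s) :
    |trimmedMean m β x - μx| ≤ (t + 3 * β * s) / (1 - 2 * β) := by
  set b := ⌊β * m⌋₊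
  have hm' : (0 : ℝ) < m := Nat.cast_pos.mpr hm
  have hSm : (S.card : ℝ) ≤ m := by exact_mod_cast S.card_le_univ.trans_eq (Fintype.card_fin m)
  have hα : 0 ≤ α := by nlinarith
  have hb : (b : ℝ) ≤ β * m := Nat.floor_le (by nlinarith)
  have hS : (0 : ℝ) < S.card := by rw [hcard]; nlinarith
  have h2b : 2 * b < m := by exact_mod_cast (show (2 * b : ℝ) < m by nlinarith)
  have hout : m - S.card ≤ b := Nat.le_floor <| by
    rw [Nat.cast_sub (by exact_mod_cast hSm)]; nlinarith
  obtain ⟨i₀, hi₀⟩ : S.Nonempty := Finset.card_pos.mp (by exact_mod_cast hS)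
  have hs : 0 ≤ s := (abs_nonneg _).trans (hmax i₀ hi₀)
  have ht : 0 ≤ t := (abs_nonneg _).trans hmean
  have hbenign : |∑ i ∈ S, x i - S.card * μx| ≤ S.card * t :=
    abs_sub_mul_le_mul_of_abs_inv_mul_sub_le hS (by rwa [hcard])
  calc |trimmedMean m β x - μx|
      ≤ (|∑ i ∈ S, x i - S.card * μx| + 3 * b * s) / (m - 2 * b) :=
        abs_trimmedMean_sub_le hs hmax hout h2b
    _ ≤ ((t + 3 * β * s) * m) / ((1 - 2 * β) * m) := by
        refine div_le_div₀ (by nlinarith) ?_ (by nlinarith) (by linarith)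
        linarith [mul_le_mul_of_nonneg_right hSm ht, mul_le_mul_of_nonneg_right hb hs]
    _ = (t + 3 * β * s) / (1 - 2 * β) := mul_div_mul_right _ _ hm'.ne'

/-- Robustness of the trimmed mean: if the benign values have empirical mean within `t`
of `μx` and are each within `s` of `μx`, then the `β`-trimmed mean of all `m` values is
within `(t + 3βs)/(1 - 2β)` of `μx`. -/
theorem stmt19 (m : ℕ) (hm : 0 < m) (α β μx t s : ℝ) (x : Fin m → ℝ)
    (S : Finset (Fin m)) (hα0 : 0 ≤ α) (hαβ : α ≤ β) (hβ : β < 1 / 2)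
    (ht : 0 ≤ t) (hs : 0 ≤ s)
    (hcard : (S.card : ℝ) = (1 - α) * m)
    (hmean : |(((1 - α) * m)⁻¹ * ∑ i ∈ S, x i) - μx| ≤ t)
    (hmax : ∀ i ∈ S, |x i - μx| ≤ s) :
    |trimmedMean m β x - μx| ≤ (t + 3 * β * s) / (1 - 2 * β) :=
  stmt19_general m hm α β μx t s x S hαβ hβ hcard hmean hmax
end
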